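/- arXiv:2408.13410 — 2 statements merged into one kernel-verified Lean document; each statement's English description precedes it below -/
import Mathlib

section
/- Let R be a commutative ring with elements a, z invertible and γ satisfying z*γ = a + a⁻¹ - z. Define K and P : ℕ → R by K 0 = P 0 = γ, K 1 = P 1 = a⁻¹, K (q+2) = z * a^(q+1) + z * K (q+1) - K q, and P (q+2) = z * a^(q+1) + z * P (q+1). Define g : ℕ → R by g 0 = 1, g 1 = z, g (n+2) = z * g (n+1) - g n. Then for all q ≥ 2, K q = P q - ∑_{i=0}^{q-2} P i * g (q-2-i). -/
/-!
Both `K` and `P` are driven by the same forcing term `z * a ^ (q + 1)`, so the difference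
`P - K` vanishes at `0` and `1` and satisfies the Chebyshev recurrence forced by `P` itself:
`E (n + 2) = z * E (n + 1) - E n + P n`. The sequence `g` is the fundamental solution of that
recurrence, so by Duhamel's principle `E (n + 2)` is the convolution of `P` with `g`.
-/

open Finset Finset.Nat

section ChebyshevConvolution

variable {R : Type*} [CommRing R] {z : R} {g : ℕ → R}

theorem sum_antidiagonal_mul_chebyshev_add_two (hg0 : g 0 = 1) (hg1 : g 1 = z)
    (hgrec : ∀ n, g (n + 2) = z * g (n + 1) - g n) (f : ℕ → R) (n : ℕ) :
    ∑ p ∈ antidiagonal (n + 2), f p.1 * g p.2 =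
      z * ∑ p ∈ antidiagonal (n + 1), f p.1 * g p.2
        - ∑ p ∈ antidiagonal n, f p.1 * g p.2 + f (n + 2) := by
  simp only [sum_antidiagonal_succ', hgrec, mul_sub, sum_sub_distrib, mul_add, mul_sum, hg0, hg1,
    mul_left_comm z]
  ring

theorem eq_sum_antidiagonal_mul_chebyshev (hg0 : g 0 = 1) (hg1 : g 1 = z)
    (hgrec : ∀ n, g (n + 2) = z * g (n + 1) - g n) {f E : ℕ → R} (hE0 : E 0 = 0) (hE1 : E 1 = 0)
    (hE : ∀ n, E (n + 2) = z * E (n + 1) - E n + f n) (n : ℕ) :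
    E (n + 2) = ∑ p ∈ antidiagonal n, f p.1 * g p.2 := by
  induction n using Nat.twoStepInduction with
  | zero => simp [hE, hE0, hE1, hg0]
  | one => simp [hE, hE0, hE1, hg0, hg1, sum_antidiagonal_succ']; ring
  | more n ih₀ ih₁ =>
    rw [hE, ih₁, ih₀, sum_antidiagonal_mul_chebyshev_add_two hg0 hg1 hgrec]

end ChebyshevConvolution

theorem stmt_3_general {R : Type*} [CommRing R] (a ai z γ : R)
    (K P g : ℕ → R)
    (hK0 : K 0 = γ) (hK1 : K 1 = ai)
    (hKrec : ∀ q : ℕ, K (q + 2) = z * a ^ (q + 1) + z * K (q + 1) - K q)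
    (hP0 : P 0 = γ) (hP1 : P 1 = ai)
    (hPrec : ∀ q : ℕ, P (q + 2) = z * a ^ (q + 1) + z * P (q + 1))
    (hg0 : g 0 = 1) (hg1 : g 1 = z)
    (hgrec : ∀ n : ℕ, g (n + 2) = z * g (n + 1) - g n) :
    ∀ q : ℕ, 2 ≤ q → K q = P q - ∑ i ∈ Finset.range (q - 1), P i * g (q - 2 - i) := by
  intro q hq
  obtain ⟨n, rfl⟩ : ∃ n, q = n + 2 := ⟨q - 2, by omega⟩
  have hdiff := eq_sum_antidiagonal_mul_chebyshev hg0 hg1 hgrec (f := P) (E := fun q ↦ P q - K q)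
    (by simp [hP0, hK0]) (by simp [hP1, hK1])
    (fun n ↦ by simp only [hPrec, hKrec]; ring) n
  rw [sum_antidiagonal_eq_sum_range_succ (fun i j ↦ P i * g j)] at hdiff
  rw [show n + 2 - 1 = n + 1 from rfl, Nat.add_sub_cancel, ← hdiff]
  ring

/-- Theorem 7.5: the Kauffman polynomial recursion `K` for `(2,q)` torus knots satisfies
`K q = P q - ∑_{i=0}^{q-2} P i * g (q-2-i)` for all `q ≥ 2`, where `P` is the
perfect-matching partition function recursion and `g` is the Chebyshev-like sequence. -/
theorem stmt_3 {R : Type*} [CommRing R] (a ai z zi γ : R)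
    (ha : a * ai = 1) (hz : z * zi = 1) (hγ : z * γ = a + ai - z)
    (K P g : ℕ → R)
    (hK0 : K 0 = γ) (hK1 : K 1 = ai)
    (hKrec : ∀ q : ℕ, K (q + 2) = z * a ^ (q + 1) + z * K (q + 1) - K q)
    (hP0 : P 0 = γ) (hP1 : P 1 = ai)
    (hPrec : ∀ q : ℕ, P (q + 2) = z * a ^ (q + 1) + z * P (q + 1))
    (hg0 : g 0 = 1) (hg1 : g 1 = z)
    (hgrec : ∀ n : ℕ, g (n + 2) = z * g (n + 1) - g n) :
    ∀ q : ℕ, 2 ≤ q → K q = P q - ∑ i ∈ Finset.range (q - 1), P i * g (q - 2 - i) :=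
  stmt_3_general a ai z γ K P g hK0 hK1 hKrec hP0 hP1 hPrec hg0 hg1 hgrec
end

section
/- For q ≥ 1, consider the bipartite graph G with vertex set {v_1, …, v_q} ⊔ {w_1, …, w_q} and edge set consisting of: edges v_i–w_i for 1 ≤ i ≤ q-1, edges v_{i+1}–w_i for 1 ≤ i ≤ q-1, and edges v_i–w_q for all 1 ≤ i ≤ q. Then G has exactly q perfect matchings. -/
/-!
For `k : Fin q`, pairing `w_j` with `v_{σ j}`, where `σ` is the cycle `(k k+1 … q-1)`, is a
perfect matching in which `v_k` covers the outer face `w_{q-1}` (indices from `0`). Conversely,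
once `v_k` covers `w_{q-1}` the rest is forced: each `v_i` has at most the neighbours `w_i`,
`w_{i-1}` and `w_{q-1}`, so going up from `v_0` the vertices `v_i` with `i < k` must take `w_i`,
and going down from `v_{q-1}` the vertices `v_i` with `i > k` must take `w_{i-1}`.
-/

/-- The balanced overlaid Tait graph of the `(2,q)` torus knot: a bipartite graph on
`{v_1, …, v_q} ⊔ {w_1, …, w_q}` (zero-indexed) with edges `v_i – w_i` and `v_{i+1} – w_i`
for `1 ≤ i ≤ q-1`, and `v_i – w_q` for all `i`. -/
def torusBOTGraph (q : ℕ) : SimpleGraph (Fin q ⊕ Fin q) :=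
  SimpleGraph.fromRel (fun x y =>
    match x, y with
    | Sum.inl i, Sum.inr j =>
        ((i : ℕ) = (j : ℕ) ∧ (i : ℕ) < q - 1) ∨
        ((i : ℕ) = (j : ℕ) + 1 ∧ (j : ℕ) < q - 1) ∨
        (j : ℕ) = q - 1
    | _, _ => False)

namespace SimpleGraph

theorem Subgraph.IsPerfectMatching.eq_of_le {V : Type*} {G : SimpleGraph V} {M N : G.Subgraph}
    (hN : N.IsPerfectMatching) (hM : M.IsMatching) (hNM : N ≤ M) : N = M := by
  refine le_antisymm hNM ⟨fun v _ ↦ hN.2 v, fun v w hvw ↦ ?_⟩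
  obtain ⟨w', hvw', -⟩ := hN.1 (hN.2 v)
  rwa [hM.eq_of_adj_left hvw (hNM.2 hvw')]

section matchingOfEquiv

variable {α β : Type*} {G : SimpleGraph (α ⊕ β)}

def matchingOfEquiv (e : β ≃ α) (he : ∀ b, G.Adj (.inl (e b)) (.inr b)) : G.Subgraph where
  verts := Set.univ
  Adj
    | .inl a, .inr b | .inr b, .inl a => a = e b
    | _, _ => False
  adj_sub := by
    rintro (a | b) (a' | b') h
    · exact h.elim
    · exact h ▸ he b'
    · exact h ▸ (he b).symm
    · exact h.elim
  edge_vert _ := Set.mem_univ _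
  symm := ⟨by rintro (a | b) (a' | b') h <;> exact h⟩

variable {e : β ≃ α} {he : ∀ b, G.Adj (.inl (e b)) (.inr b)}

@[simp]
theorem matchingOfEquiv_adj_inl_inr {a : α} {b : β} :
    (matchingOfEquiv e he).Adj (.inl a) (.inr b) ↔ a = e b := Iff.rfl

theorem matchingOfEquiv_isPerfectMatching : (matchingOfEquiv e he).IsPerfectMatching := by
  refine Subgraph.isPerfectMatching_iff.mpr ?_
  rintro (a | b)
  · refine ⟨.inr (e.symm a), (e.apply_symm_apply a).symm, ?_⟩
    rintro (a' | b') h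
    · exact h.elim
    · exact congrArg Sum.inr (e.eq_symm_apply.mpr (Eq.symm h))
  · refine ⟨.inl (e b), rfl, ?_⟩
    rintro (a' | b') h
    · exact congrArg Sum.inl h
    · exact h.elim

theorem Subgraph.IsPerfectMatching.eq_matchingOfEquiv {M : G.Subgraph}
    (hM : M.IsPerfectMatching) (h : ∀ b, M.Adj (.inl (e b)) (.inr b)) :
    matchingOfEquiv e he = M := by
  refine matchingOfEquiv_isPerfectMatching.eq_of_le hM.1 ⟨fun v _ ↦ hM.2 v, ?_⟩
  rintro (a | b) (a' | b') hab
  · exact hab.elim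
  · exact hab ▸ h b'
  · exact hab ▸ (h b).symm
  · exact hab.elim

end matchingOfEquiv

end SimpleGraph

open SimpleGraph Fin

namespace torusBOTGraph

variable {n : ℕ}

theorem adj_inl_inr {i j : Fin (n + 1)} :
    (torusBOTGraph (n + 1)).Adj (.inl i) (.inr j) ↔
      i = j ∨ (i : ℕ) = j + 1 ∨ j = last n := by
  simp only [torusBOTGraph, fromRel_adj, ne_eq, reduceCtorEq, not_false_eq_true, or_false,
    true_and, Fin.ext_iff, val_last, Nat.add_sub_cancel]
  omega

theorem not_adj_inl_inl {i j : Fin (n + 1)} : ¬(torusBOTGraph (n + 1)).Adj (.inl i) (.inl j) := by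
  simp [torusBOTGraph]

theorem not_adj_inr_inr {i j : Fin (n + 1)} : ¬(torusBOTGraph (n + 1)).Adj (.inr i) (.inr j) := by
  simp [torusBOTGraph]

theorem adj_cycleIcc_last (k j : Fin (n + 1)) :
    (torusBOTGraph (n + 1)).Adj (.inl (cycleIcc k (last n) j)) (.inr j) := by
  rw [adj_inl_inr]
  rcases lt_or_ge j k with hjk | hkj
  · exact .inl (cycleIcc_of_lt hjk)
  rcases (le_last j).lt_or_eq with hj | rfl
  · rw [cycleIcc_of_ge_of_lt hkj hj, val_add_one_of_lt hj]
    exact .inr (.inl rfl)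
  · exact .inr (.inr rfl)

def perfectMatching (n : ℕ) (k : Fin (n + 1)) : (torusBOTGraph (n + 1)).Subgraph :=
  matchingOfEquiv (cycleIcc k (last n)) (adj_cycleIcc_last k)

theorem perfectMatching_injective : Function.Injective (perfectMatching n) := by
  intro k k' h
  have hk : (perfectMatching n k).Adj (.inl k) (.inr (last n)) := by
    simp [perfectMatching, cycleIcc_of_last (le_last k)]
  rw [h] at hk
  simpa [perfectMatching, cycleIcc_of_last (le_last k')] using hk

variable {M : (torusBOTGraph (n + 1)).Subgraph}

theorem exists_adj_inr (hM : M.IsPerfectMatching) (i : Fin (n + 1)) :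
    ∃ j, M.Adj (.inl i) (.inr j) := by
  obtain ⟨j | j, hij, -⟩ := hM.1 (hM.2 (.inl i))
  · exact absurd (M.adj_sub hij) not_adj_inl_inl
  · exact ⟨j, hij⟩

theorem exists_adj_inl (hM : M.IsPerfectMatching) (j : Fin (n + 1)) :
    ∃ i, M.Adj (.inl i) (.inr j) := by
  obtain ⟨i | i, hij, -⟩ := hM.1 (hM.2 (.inr j))
  · exact ⟨i, hij.symm⟩
  · exact absurd (M.adj_sub hij) not_adj_inr_inr

variable {k : Fin (n + 1)}

theorem adj_of_lt (hM : M.IsPerfectMatching) (hk : M.Adj (.inl k) (.inr (last n)))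
    (i : Fin (n + 1)) (hik : i < k) : M.Adj (.inl i) (.inr i) := by
  induction i using WellFoundedLT.induction with | _ i ih
  obtain ⟨j, hij⟩ := exists_adj_inr hM i
  rcases adj_inl_inr.mp (M.adj_sub hij) with rfl | hji | rfl
  · exact hij
  · have hj : j < i := by rw [Fin.lt_def]; omega
    cases hM.1.eq_of_adj_right hij (ih j hj (hj.trans hik))
    exact absurd hj (lt_irrefl _)
  · cases hM.1.eq_of_adj_right hij hk
    exact absurd hik (lt_irrefl _)

theorem adj_of_gt (hM : M.IsPerfectMatching) (hk : M.Adj (.inl k) (.inr (last n)))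
    (i j : Fin (n + 1)) (hki : k < i) (hij : (i : ℕ) = j + 1) : M.Adj (.inl i) (.inr j) := by
  induction i using WellFoundedGT.induction generalizing j with | _ i ih
  obtain ⟨j', hij'⟩ := exists_adj_inr hM i
  rcases adj_inl_inr.mp (M.adj_sub hij') with rfl | hj' | rfl
  · rcases (le_last i).lt_or_eq with hi | rfl
    · have hlt : i < i + 1 := Fin.lt_add_one_iff.mpr hi
      have := hM.1.eq_of_adj_right hij' (ih (i + 1) hlt i (hki.trans hlt) (val_add_one_of_lt hi))
      exact absurd (Sum.inl_injective this) hlt.ne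
    · cases hM.1.eq_of_adj_right hij' hk
      exact absurd hki (lt_irrefl _)
  · rwa [Fin.ext (by omega : (j : ℕ) = j')]
  · cases hM.1.eq_of_adj_right hij' hk
    exact absurd hki (lt_irrefl _)

theorem eq_perfectMatching (hM : M.IsPerfectMatching) (hk : M.Adj (.inl k) (.inr (last n))) :
    perfectMatching n k = M := by
  refine hM.eq_matchingOfEquiv fun j ↦ ?_
  rcases lt_or_ge j k with hjk | hkj
  · rw [cycleIcc_of_lt hjk]
    exact adj_of_lt hM hk j hjk
  rcases (le_last j).lt_or_eq with hj | rfl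
  · rw [cycleIcc_of_ge_of_lt hkj hj]
    exact adj_of_gt hM hk _ j (lt_of_le_of_lt hkj (Fin.lt_add_one_iff.mpr hj))
      (val_add_one_of_lt hj)
  · rwa [cycleIcc_of_last (le_last k)]

end torusBOTGraph

/-- The balanced overlaid Tait graph of the `(2,q)` torus knot has exactly `q` perfect
matchings. -/
theorem stmt_9 (q : ℕ) (hq : 1 ≤ q) :
    {M : (torusBOTGraph q).Subgraph | M.IsPerfectMatching}.ncard = q := by
  obtain ⟨n, rfl⟩ := Nat.exists_eq_add_of_le' hq
  have hrange : {M : (torusBOTGraph (n + 1)).Subgraph | M.IsPerfectMatching} =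
      Set.range (torusBOTGraph.perfectMatching n) := by
    ext M
    refine ⟨fun hM ↦ ?_, ?_⟩
    · obtain ⟨k, hk⟩ := torusBOTGraph.exists_adj_inl hM (last n)
      exact ⟨k, torusBOTGraph.eq_perfectMatching hM hk⟩
    · rintro ⟨k, rfl⟩
      exact matchingOfEquiv_isPerfectMatching
  rw [hrange, Set.ncard_range_of_injective torusBOTGraph.perfectMatching_injective,
    Nat.card_eq_fintype_card, Fintype.card_fin]
end
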